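/- arXiv:1909.01306 — 5 statements merged into one kernel-verified Lean document; each statement's English description precedes it below -/
import Mathlib

section
/- Let a and n be positive integers with 1 ≤ a < n and gcd(a,n) = 1. The set of lattice points in the interior of P_{a,n} is exactly {(⌈k·a/n⌉, k) : k = 1, 2, …, n−1}, i.e. a point (x,y) ∈ ℤ² lies in the interior of P_{a,n} if and only if there exists k with 1 ≤ k ≤ n−1, y = k and x = ⌈k·a/n⌉. -/
/-- `(x, y) ∈ ℤ²` lies in the interior of the lattice parallelogram
`P_{a,n} = {t₁·(1,0) + t₂·(a,n) : 0 ≤ t₁, t₂ ≤ 1}`. -/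
def inInteriorP (a n : ℤ) (p : ℤ × ℤ) : Prop :=
  ∃ t₁ t₂ : ℝ, 0 < t₁ ∧ t₁ < 1 ∧ 0 < t₂ ∧ t₂ < 1 ∧
    (p.1 : ℝ) = t₁ + t₂ * (a : ℝ) ∧ (p.2 : ℝ) = t₂ * (n : ℝ)

/-!
Writing `(x, y) = t₁ • (1, 0) + t₂ • (a, n)` forces `t₂ = y / n` and `t₁ = x - y a / n`, so a
lattice point is interior exactly when `0 < y < n` and `y a / n < x < y a / n + 1`. Since `a` is
coprime to `n`, the number `y a / n` is never an integer for `0 < y < n`, so this open interval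
of length one contains exactly one integer, namely `⌈y a / n⌉`.
-/

theorem inInteriorP_iff {a n : ℤ} (hn : 0 < n) (x y : ℤ) :
    inInteriorP a n (x, y) ↔ 0 < y ∧ y < n ∧ y * a < x * n ∧ x * n < y * a + n := by
  have hnR : (0 : ℝ) < n := by exact_mod_cast hn
  constructor
  · rintro ⟨t₁, t₂, ht₁, ht₁', ht₂, ht₂', hx, hy⟩
    simp only at hx hy
    have hxn : (x * n : ℝ) = t₁ * n + y * a := by rw [hx, hy]; ring
    have ht₁n : 0 < t₁ * n ∧ t₁ * n < n := ⟨by positivity, mul_lt_of_lt_one_left hnR ht₁'⟩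
    have ht₂n : 0 < t₂ * n ∧ t₂ * n < n := ⟨by positivity, mul_lt_of_lt_one_left hnR ht₂'⟩
    rw [← hy] at ht₂n
    have hR : (0 : ℝ) < y ∧ (y : ℝ) < n ∧ (y * a : ℝ) < x * n ∧ (x * n : ℝ) < y * a + n :=
      ⟨ht₂n.1, ht₂n.2, by linarith, by linarith⟩
    exact_mod_cast hR
  · rintro ⟨hy, hyn, hlow, hup⟩
    have hyn : (y : ℝ) < n := by exact_mod_cast hyn
    have hlow : (y * a : ℝ) < x * n := by exact_mod_cast hlow
    have hup : (x * n : ℝ) < y * a + n := by exact_mod_cast hup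
    refine ⟨x - y * a / n, y / n, ?_, ?_, by positivity, (div_lt_one hnR).2 hyn, by ring,
      by field_simp⟩
    · rwa [sub_pos, div_lt_iff₀ hnR]
    · rwa [sub_lt_iff_lt_add', div_add_one hnR.ne', lt_div_iff₀ hnR]

theorem ceil_intCast_div_eq_iff {m n : ℤ} (hn : 0 < n) (hmn : ¬ n ∣ m) (x : ℤ) :
    ⌈(m : ℚ) / n⌉ = x ↔ m < x * n ∧ x * n < m + n := by
  have hnQ : (0 : ℚ) < n := by exact_mod_cast hn
  have hne : m ≠ x * n := fun h => hmn ⟨x, by rw [h, mul_comm]⟩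
  rw [Int.ceil_eq_iff, lt_div_iff₀ hnQ, div_le_iff₀ hnQ]
  norm_cast
  rw [sub_mul, one_mul]
  generalize x * n = k at *
  omega

theorem not_dvd_mul_of_isCoprime {a n y : ℤ} (h : IsCoprime a n) (hy : 0 < y) (hyn : y < n) :
    ¬ n ∣ y * a := fun hdvd => by
  have := Int.le_of_dvd hy (h.symm.dvd_of_dvd_mul_right hdvd)
  omega

/-- The lattice points in the interior of `P_{a,n}` are exactly the points
`(⌈k·a/n⌉, k)` for `k = 1, …, n − 1`. -/
theorem interior_lattice_points_eq (a n : ℤ) (ha : 1 ≤ a) (han : a < n)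
    (hgcd : Int.gcd a n = 1) (x y : ℤ) :
    inInteriorP a n (x, y) ↔
      ∃ k : ℤ, 1 ≤ k ∧ k ≤ n - 1 ∧ y = k ∧ x = ⌈(k * a : ℚ) / (n : ℚ)⌉ := by
  have hn : 0 < n := by omega
  have hcop : IsCoprime a n := Int.isCoprime_iff_gcd_eq_one.2 hgcd
  have hceil : ∀ {k : ℤ}, 0 < k → k < n →
      (x = ⌈(k * a : ℚ) / n⌉ ↔ k * a < x * n ∧ x * n < k * a + n) := fun hk hkn => by
    rw [eq_comm, ← Int.cast_mul,
      ceil_intCast_div_eq_iff hn (not_dvd_mul_of_isCoprime hcop hk hkn)]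
  rw [inInteriorP_iff hn]
  constructor
  · rintro ⟨hy, hyn, hx⟩
    exact ⟨y, by omega, by omega, rfl, (hceil hy hyn).2 hx⟩
  · rintro ⟨k, hk, hkn, rfl, rfl⟩
    exact ⟨hk, by omega, (hceil hk (by omega)).1 rfl⟩
end

section
/- Let a and n be integers with 2 ≤ a < n and gcd(a,n) = 1. Then there exists a positive integer l with n < 2·l·a < 2n, and for any such l the lattice point (2, 2l) lies in the interior of P_{a,n} and is not visible (since gcd(2, 2l) = 2 > 1). In particular P_{a,n} contains a non-visible interior lattice point. -/
/-- A lattice point `(x, y) ∈ ℤ²` is visible (from the origin) if `gcd(x, y) = 1`. -/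
def VisiblePt (p : ℤ × ℤ) : Prop := Int.gcd p.1 p.2 = 1

/-- `V a n` is the number of visible lattice points in the interior of `P_{a,n}`. -/
noncomputable def V (a n : ℤ) : ℕ :=
  {p : ℤ × ℤ | inInteriorP a n p ∧ VisiblePt p}.ncard

/-! The multiple `2la` of `2a` just above `n` stays below `2n` because `2a ∤ n`; writing
`(2, 2l) = t₁·(1,0) + t₂·(a,n)` forces `t₂ = 2l/n` and `t₁ = 2 - 2la/n`, both in `(0, 1)`
exactly when `n < 2la < 2n`. -/

theorem not_dvd_of_gcd_eq_one {a n : ℤ} (ha : 2 ≤ a) (hgcd : Int.gcd a n = 1) : ¬ a ∣ n := by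
  intro hdvd
  have hunit : IsUnit a :=
    (Int.isCoprime_iff_gcd_eq_one.mpr hgcd).isUnit_of_dvd' dvd_rfl hdvd
  rcases Int.isUnit_iff.mp hunit with h | h <;> omega

theorem exists_mul_mem_Ioo_of_not_dvd {n d : ℤ} (hd : 0 < d) (hdn : d < 2 * n)
    (hdvd : ¬ d ∣ n) :
    ∃ l : ℤ, 0 < l ∧ l * d ∈ Set.Ioo n (2 * n) := by
  rcases lt_or_ge n d with hnd | hdn'
  · exact ⟨1, one_pos, by omega, by omega⟩
  · -- the next multiple of `d` above `n` overshoots `n` by `d - n % d < d ≤ n`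
    have hr : 0 < n % d := (Int.emod_pos_of_not_dvd hdvd).resolve_left hd.ne'
    have hmod := Int.emod_add_mul_ediv n d
    have hq : 0 ≤ n / d := Int.ediv_nonneg (by omega) hd.le
    exact ⟨n / d + 1, by omega, Int.lt_ediv_add_one_mul_self n hd, by linarith⟩

theorem inInteriorP_of_lt {a n x y : ℤ} (hn : 0 < n) (hy₀ : 0 < y) (hyn : y < n)
    (hlo : y * a < x * n) (hhi : x * n < n + y * a) : inInteriorP a n (x, y) := by
  have hnR : (0 : ℝ) < n := by exact_mod_cast hn
  refine ⟨x - y / n * a, y / n, ?_, ?_, by positivity,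
    (div_lt_one hnR).mpr (by exact_mod_cast hyn), by ring, by field_simp⟩
  · rw [div_mul_eq_mul_div, sub_pos, div_lt_iff₀ hnR]
    exact_mod_cast hlo
  · rw [div_mul_eq_mul_div, sub_lt_comm, lt_div_iff₀ hnR, sub_mul, one_mul]
    have : (x * n : ℝ) < n + y * a := by exact_mod_cast hhi
    linarith

theorem not_visiblePt_of_dvd {d : ℤ} {p : ℤ × ℤ} (hd : 2 ≤ d) (h₁ : d ∣ p.1)
    (h₂ : d ∣ p.2) : ¬ VisiblePt p := by
  intro hvis
  have hd1 : d ∣ ((1 : ℕ) : ℤ) := hvis ▸ Int.dvd_coe_gcd h₁ h₂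
  have := Int.le_of_dvd (by norm_num) hd1
  omega

/-- For `2 ≤ a < n` with `gcd(a, n) = 1`, there is a positive integer `l` with
`n < 2·l·a < 2n`, and for any such `l` the point `(2, 2l)` is a non-visible
lattice point in the interior of `P_{a,n}`. -/
theorem exists_nonvisible_interior_point (a n : ℤ) (ha : 2 ≤ a) (han : a < n)
    (hgcd : Int.gcd a n = 1) :
    (∃ l : ℤ, 0 < l ∧ n < 2 * l * a ∧ 2 * l * a < 2 * n) ∧
      ∀ l : ℤ, 0 < l → n < 2 * l * a → 2 * l * a < 2 * n →
        inInteriorP a n (2, 2 * l) ∧ ¬ VisiblePt (2, 2 * l) := by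
  have hdvd : ¬ 2 * a ∣ n := fun h =>
    not_dvd_of_gcd_eq_one ha hgcd ((dvd_mul_left a 2).trans h)
  refine ⟨?_, fun l hl hlo hhi => ⟨?_, ?_⟩⟩
  · obtain ⟨l, hl, hlo, hhi⟩ := exists_mul_mem_Ioo_of_not_dvd (by omega) (by omega) hdvd
    exact ⟨l, hl, by linarith, by linarith⟩
  · exact inInteriorP_of_lt (by omega) (by omega) (by nlinarith) (by linarith) (by linarith)
  · exact not_visiblePt_of_dvd le_rfl (dvd_refl 2) (dvd_mul_right 2 l)
end

section
/- Let a, b, n be integers with 1 ≤ a < n, 1 ≤ b < n and a·b ≡ 1 (mod n). Then V(a,n) = V(b,n). -/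
theorem Int.gcd_dvd_gcd_linear_comb (x y α β γ δ : ℤ) :
    Int.gcd x y ∣ Int.gcd (α * x + β * y) (γ * x + δ * y) :=
  Int.natCast_dvd_natCast.mp <| Int.dvd_coe_gcd
    ((Int.gcd_dvd_left x y).linear_comb (Int.gcd_dvd_right x y) α β)
    ((Int.gcd_dvd_left x y).linear_comb (Int.gcd_dvd_right x y) γ δ)

def edgeSwap (a b k n : ℤ) (p : ℤ × ℤ) : ℤ × ℤ := (b * p.1 - k * p.2, n * p.1 - a * p.2)

section edgeSwap

variable {a b k n : ℤ}

theorem edgeSwap_edgeSwap (hk : a * b = 1 + n * k) (p : ℤ × ℤ) :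
    edgeSwap b a k n (edgeSwap a b k n p) = p := by
  obtain ⟨x, y⟩ := p
  simp only [edgeSwap, Prod.mk.injEq]
  constructor
  · linear_combination x * hk
  · linear_combination y * hk

theorem inInteriorP_edgeSwap (hk : a * b = 1 + n * k) {p : ℤ × ℤ} (hp : inInteriorP a n p) :
    inInteriorP b n (edgeSwap a b k n p) := by
  obtain ⟨t₁, t₂, h₁, h₁', h₂, h₂', hx, hy⟩ := hp
  have hkR : (a : ℝ) * b = 1 + n * k := by exact_mod_cast hk
  refine ⟨t₂, t₁, h₂, h₂', h₁, h₁', ?_, ?_⟩ <;> push_cast [edgeSwap, hx, hy]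
  · linear_combination t₂ * hkR
  · ring

theorem visiblePt_edgeSwap (hk : a * b = 1 + n * k) {p : ℤ × ℤ} (hp : VisiblePt p) :
    VisiblePt (edgeSwap a b k n p) := by
  set q := edgeSwap a b k n p
  have hqp : edgeSwap b a k n q = p := edgeSwap_edgeSwap hk p
  have hdvd := Int.gcd_dvd_gcd_linear_comb q.1 q.2 a (-k) n (-b)
  simp only [neg_mul, ← sub_eq_add_neg] at hdvd
  rw [← hqp] at hp
  exact Nat.dvd_one.mp (hp ▸ hdvd)

theorem mapsTo_edgeSwap (hk : a * b = 1 + n * k) :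
    Set.MapsTo (edgeSwap a b k n) {p | inInteriorP a n p ∧ VisiblePt p}
      {p | inInteriorP b n p ∧ VisiblePt p} :=
  fun _ ⟨hin, hvis⟩ => ⟨inInteriorP_edgeSwap hk hin, visiblePt_edgeSwap hk hvis⟩

end edgeSwap

theorem V_inv_mod_general (a b n : ℤ) (hab : a * b ≡ 1 [ZMOD n]) : V a n = V b n := by
  obtain ⟨k, hk⟩ := Int.modEq_iff_add_fac.mp hab.symm
  have hk' : b * a = 1 + n * k := by rw [mul_comm, hk]
  exact (Set.InvOn.bijOn ⟨fun p _ => edgeSwap_edgeSwap hk p, fun p _ => edgeSwap_edgeSwap hk' p⟩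
    (mapsTo_edgeSwap hk) (mapsTo_edgeSwap hk')).ncard_eq

/-- If `a·b ≡ 1 (mod n)` then `V(a,n) = V(b,n)`. -/
theorem V_inv_mod (a b n : ℤ) (ha : 1 ≤ a) (han : a < n) (hb : 1 ≤ b)
    (hbn : b < n) (hab : a * b ≡ 1 [ZMOD n]) : V a n = V b n :=
  V_inv_mod_general a b n hab
end

section
/- Let a, b, k, n be integers with 1 ≤ a < n, 1 ≤ b < n and a·b + k·n = 1. Let L : ℝ² → ℝ² be the linear map determined by L(1,0) = (b,n) and L(0,1) = (k,−a). Then L is unimodular (its matrix has integer entries and determinant −1), L maps (a,n) to (1,0), and the image of P_{a,n} under L is exactly P_{b,n}. -/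
/-- The (closed) lattice parallelogram `P_{a,n}` spanned by `(1,0)` and `(a,n)`,
as a subset of `ℝ²`. -/
def ParSet (a n : ℤ) : Set (ℝ × ℝ) :=
  {p | ∃ t₁ t₂ : ℝ, 0 ≤ t₁ ∧ t₁ ≤ 1 ∧ 0 ≤ t₂ ∧ t₂ ≤ 1 ∧
    p.1 = t₁ + t₂ * (a : ℝ) ∧ p.2 = t₂ * (n : ℝ)}

/-- If `a·b + k·n = 1` then the linear map `L` with `L(1,0) = (b,n)` and
`L(0,1) = (k,−a)` is unimodular (integer matrix of determinant `−1`),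
it maps `(a,n)` to `(1,0)`, and it maps `P_{a,n}` onto `P_{b,n}`. -/
theorem unimodular_map_Pan_to_Pbn (a b k n : ℤ) (ha : 1 ≤ a) (han : a < n)
    (hb : 1 ≤ b) (hbn : b < n) (hab : a * b + k * n = 1)
    (L : ℝ × ℝ → ℝ × ℝ)
    (hL : ∀ p : ℝ × ℝ, L p = ((b : ℝ) * p.1 + (k : ℝ) * p.2,
      (n : ℝ) * p.1 + (-(a : ℝ)) * p.2)) :
    b * (-a) - k * n = -1 ∧
      L ((a : ℝ), (n : ℝ)) = (1, 0) ∧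
      L '' ParSet a n = ParSet b n := by
  have habR : (a : ℝ) * b + k * n = 1 := by exact_mod_cast hab
  refine ⟨by linarith, ?_, ?_⟩
  · rw [hL]
    have h1 : (b : ℝ) * a + k * n = 1 := by linarith
    have h2 : (n : ℝ) * a + (-(a : ℝ)) * n = 0 := by ring
    simp only [Prod.mk.injEq]
    exact ⟨h1, h2⟩
  · ext p
    constructor
    · rintro ⟨q, ⟨t₁, t₂, h0, h1, h2, h3, hx, hy⟩, rfl⟩
      refine ⟨t₂, t₁, h2, h3, h0, h1, ?_, ?_⟩
      · rw [hL]; dsimp; rw [hx, hy]; nlinarith [habR]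
      · rw [hL]; dsimp; rw [hx, hy]; ring
    · rintro ⟨t₁, t₂, h0, h1, h2, h3, hx, hy⟩
      refine ⟨(t₂ + t₁ * a, t₁ * n), ⟨t₂, t₁, h2, h3, h0, h1, rfl, rfl⟩, ?_⟩
      rw [hL]
      dsimp
      have : p = (t₁ + t₂ * b, t₂ * n) := Prod.ext hx hy
      rw [this, Prod.mk.injEq]
      constructor
      · nlinarith [habR]
      · ring
end

section
/- Let p be a prime and let a be an integer with 1 ≤ a < p. Then for every integer k with 1 ≤ k ≤ p − 1, gcd(⌈k(p−a)/p⌉, k) = gcd(k·a mod p, k), where k·a mod p denotes the least nonnegative residue of k·a modulo p. -/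
/-!
Write `q = ⌊k a / p⌋`. Then `⌈k (p - a) / p⌉ = k - q` and `k a mod p = k a - p q`, so modulo `k`
the two gcd arguments are `-q` and `-p q`. Since `0 < k < p`, the prime `p` is coprime to `k`, and
both gcds equal `gcd(q, k)`.
-/

theorem Rat.floor_intCast_div_intCast_of_nonneg (m : ℤ) {d : ℤ} (hd : 0 ≤ d) :
    ⌊(m / d : ℚ)⌋ = m / d := by
  lift d to ℕ using hd
  exact_mod_cast Rat.floor_intCast_div_natCast m d

theorem Rat.ceil_intCast_mul_sub_div (k a : ℤ) {p : ℤ} (hp : 0 < p) :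
    ⌈(k * (p - a) : ℚ) / p⌉ = k - k * a / p := by
  have hp' : (p : ℚ) ≠ 0 := by exact_mod_cast hp.ne'
  have hsplit : (k * (p - a) : ℚ) / p = k - ((k * a : ℤ) : ℚ) / p := by
    push_cast
    field_simp
  rw [hsplit, sub_eq_neg_add, Int.ceil_add_intCast, Int.ceil_neg,
    Rat.floor_intCast_div_intCast_of_nonneg _ hp.le, neg_add_eq_sub]

theorem Int.gcd_mul_left_cancel_of_isCoprime {p k : ℤ} (h : IsCoprime p k) (q : ℤ) :
    Int.gcd (p * q) k = Int.gcd q k := by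
  rw [Int.isCoprime_iff_gcd_eq_one] at h
  simp only [Int.gcd_eq_natAbs_gcd_natAbs, Int.natAbs_mul] at h ⊢
  exact Nat.Coprime.gcd_mul_left_cancel _ h

theorem Int.gcd_mul_emod_eq_gcd_mul_ediv {p k : ℤ} (h : IsCoprime p k) (a : ℤ) :
    Int.gcd (k * a % p) k = Int.gcd (k * a / p) k := by
  rw [Int.emod_def, show k * a - p * (k * a / p) = -(p * (k * a / p)) + k * a by ring,
    Int.gcd_add_mul_left_left, Int.neg_gcd, Int.gcd_mul_left_cancel_of_isCoprime h]

theorem Prime.isCoprime_of_pos_of_lt {p k : ℤ} (hp : Prime p) (hk : 0 < k) (hkp : k < p) :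
    IsCoprime p k :=
  (Prime.coprime_iff_not_dvd hp).mpr fun hdvd => (Int.le_of_dvd hk hdvd).not_gt hkp

theorem gcd_ceil_eq_gcd_mod_general (p a k : ℤ) (hp : Prime p)
    (hk : 1 ≤ k) (hkp : k ≤ p - 1) :
    Int.gcd ⌈(k * (p - a) : ℚ) / (p : ℚ)⌉ k = Int.gcd ((k * a) % p) k := by
  have hcop : IsCoprime p k := hp.isCoprime_of_pos_of_lt (by omega) (by omega)
  rw [Rat.ceil_intCast_mul_sub_div k a (by omega : 0 < p), Int.gcd_self_sub_left,
    Int.gcd_mul_emod_eq_gcd_mul_ediv hcop]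

/-- For a prime `p`, `1 ≤ a < p` and `1 ≤ k ≤ p − 1`:
`gcd(⌈k(p−a)/p⌉, k) = gcd(k·a mod p, k)`. -/
theorem gcd_ceil_eq_gcd_mod (p a k : ℤ) (hp : Prime p) (ha : 1 ≤ a)
    (hap : a < p) (hk : 1 ≤ k) (hkp : k ≤ p - 1) :
    Int.gcd ⌈(k * (p - a) : ℚ) / (p : ℚ)⌉ k = Int.gcd ((k * a) % p) k :=
  gcd_ceil_eq_gcd_mod_general p a k hp hk hkp
end
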